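/- Key Lemma 1 (unilateral version): If (α_n, β_n)_{n≥0} is a Bailey pair relative to a, i.e., β_n = Σ_{j=0}^{n} α_j / ((q;q)_{n-j} (aq;q)_{n+j}) for all n ≥ 0, then (α'_n, β'_n) is a Bailey pair relative to a/q, where α'_0 = α_0, α'_n = (1-a)( α_n/(1 - a q^{2n}) - a q^{2n-2} α_{n-1}/(1 - a q^{2n-2}) ) for n ≥ 1, and β'_n = β_n. That is, β'_n = Σ_{j=0}^{n} α'_j / ((q;q)_{n-j} (a;q)_{n+j}) for all n ≥ 0. -/

import Mathlib

/-! The substitution `t_j = (1 - a) α_j / (1 - a q^{2j})` turns `α'` into the first difference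
`α'_{j+1} = t_{j+1} - a q^{2j} t_j`. Summing by parts moves the difference onto the kernel
`1 / ((q;q)_{n-j} (a;q)_{n+j})`; the shifted kernel is rewritten with the factor `1 - q^{n-j}`,
which vanishes at `j = n`, so that both sums run over `j ≤ n`. Then the kernel identity
`1/(a;q)_{k+l} - a q^k (1 - q^l)/(a;q)_{k+l+1} = (1 - a q^k)/(a;q)_{k+l+1}`, together with
`(a;q)_{N+1} = (1 - a) (aq;q)_N`, turns each term back into `α_j / ((q;q)_{n-j} (aq;q)_{n+j})`. -/

/-- The q-Pochhammer symbol `(x;q)_k = ∏_{i=0}^{k-1} (1 - x q^i)`. -/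
noncomputable def qp (q x : ℂ) (k : ℕ) : ℂ := ∏ i ∈ Finset.range k, (1 - x * q ^ i)

theorem Finset.sum_range_succ_div_of_eq_sub_shift {K : Type*} [DivisionRing K]
    (u v w c : ℕ → K) (n : ℕ) (h0 : u 0 = v 0) (hs : ∀ j, u (j + 1) = v (j + 1) - w j) :
    ∑ j ∈ range (n + 1), u j / c j
      = ∑ j ∈ range (n + 1), v j / c j - ∑ j ∈ range n, w j / c (j + 1) := by
  simp only [sum_range_succ' _ n, hs, h0, sub_div, sum_sub_distrib]
  abel

theorem qp_succ (q x : ℂ) (k : ℕ) : qp q x (k + 1) = qp q x k * (1 - x * q ^ k) :=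
  Finset.prod_range_succ _ _

theorem qp_succ' (q x : ℂ) (k : ℕ) : qp q x (k + 1) = (1 - x) * qp q (x * q) k := by
  rw [qp, Finset.prod_range_succ', pow_zero, mul_one, mul_comm]
  simp only [qp, pow_succ', mul_assoc]

theorem inv_qp_eq_div_qp_succ {q x : ℂ} {l : ℕ} (h : qp q x (l + 1) ≠ 0) :
    (qp q x l)⁻¹ = (1 - x * q ^ l) / qp q x (l + 1) := by
  rw [qp_succ] at h ⊢
  exact (div_mul_cancel_right₀ (right_ne_zero_of_mul h) _).symm

theorem inv_qp_sub_eq {q a : ℂ} {k l N : ℕ} (hN : k + l = N) (h : qp q a (N + 1) ≠ 0) :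
    (qp q a N)⁻¹ - a * q ^ k * (1 - q ^ l) / qp q a (N + 1)
      = (1 - a * q ^ k) / qp q a (N + 1) := by
  rw [inv_qp_eq_div_qp_succ h, div_sub_div_same, ← hN, pow_add]
  ring_nf

theorem sum_range_div_qp_pred_eq {q : ℂ} (hq : ∀ k, qp q q k ≠ 0) (w F : ℕ → ℂ)
    (n : ℕ) :
    ∑ j ∈ Finset.range n, w j / (qp q q (n - (j + 1)) * F j)
      = ∑ j ∈ Finset.range (n + 1), w j * (1 - q ^ (n - j)) / (qp q q (n - j) * F j) := by
  rw [Finset.sum_range_succ, Nat.sub_self, pow_zero, sub_self, mul_zero, zero_div, add_zero]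
  refine Finset.sum_congr rfl fun j hj => ?_
  obtain ⟨l, hl, hl'⟩ : ∃ l, n - (j + 1) = l ∧ n - j = l + 1 :=
    ⟨_, rfl, by have := Finset.mem_range.1 hj; omega⟩
  rw [hl, hl', div_mul_eq_div_div_swap, div_eq_mul_inv _ (qp q q l), inv_qp_eq_div_qp_succ (hq _),
    pow_succ']
  ring

theorem div_qp_sub_div_qp_succ {q a : ℂ} (x Q : ℂ) {k l N : ℕ} (hN : k + l = N)
    (hk : 1 - a * q ^ k ≠ 0) (h : qp q a (N + 1) ≠ 0) :
    (1 - a) * x / (1 - a * q ^ k) / (Q * qp q a N)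
        - a * q ^ k * ((1 - a) * x / (1 - a * q ^ k)) * (1 - q ^ l) / (Q * qp q a (N + 1))
      = x / (Q * qp q (a * q) N) := by
  have ha : 1 - a ≠ 0 ∧ qp q (a * q) N ≠ 0 := by
    rwa [qp_succ', mul_ne_zero_iff] at h
  calc _ = (1 - a) * x / (1 - a * q ^ k) / Q
          * ((qp q a N)⁻¹ - a * q ^ k * (1 - q ^ l) / qp q a (N + 1)) := by ring
    _ = (1 - a) * x / (1 - a * q ^ k) / Q * ((1 - a * q ^ k) / qp q a (N + 1)) := by
      rw [inv_qp_sub_eq hN h]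
    _ = x / (Q * qp q (a * q) N) := by
      rw [qp_succ']
      field_simp [ha.1, ha.2, hk]

theorem key_lemma_one_general (q a : ℂ) (α β α' β' : ℕ → ℂ)
    (hqq : ∀ k, qp q q k ≠ 0) (ha : ∀ k, qp q a k ≠ 0)
    (hden : ∀ n : ℕ, 1 - a * q ^ (2 * n) ≠ 0)
    (hB : ∀ n, β n = ∑ j ∈ Finset.range (n + 1),
        α j / (qp q q (n - j) * qp q (a * q) (n + j)))
    (hα'0 : α' 0 = α 0)
    (hα' : ∀ n : ℕ, α' (n + 1) = (1 - a) *
        (α (n + 1) / (1 - a * q ^ (2 * (n + 1)))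
          - a * q ^ (2 * n) * α n / (1 - a * q ^ (2 * n))))
    (hβ' : ∀ n, β' n = β n) :
    ∀ n, β' n = ∑ j ∈ Finset.range (n + 1),
        α' j / (qp q q (n - j) * qp q a (n + j)) := by
  intro n
  set t : ℕ → ℂ := fun j => (1 - a) * α j / (1 - a * q ^ (2 * j))
  have ht0 : α' 0 = t 0 := by
    simp only [t, hα'0, mul_zero, pow_zero, mul_one]
    rw [mul_div_cancel_left₀ _ (by simpa using hden 0)]
  have ht : ∀ j, α' (j + 1) = t (j + 1) - a * q ^ (2 * j) * t j := fun j => by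
    rw [hα' j]; ring
  rw [hβ', hB, Finset.sum_range_succ_div_of_eq_sub_shift _ _ _ _ n ht0 ht,
    sum_range_div_qp_pred_eq hqq, ← Finset.sum_sub_distrib]
  refine Finset.sum_congr rfl fun j hj => ?_
  exact (div_qp_sub_div_qp_succ _ _ (by have := Finset.mem_range.1 hj; omega) (hden j) (ha _)).symm

/-- Key Lemma 1 (unilateral): if `(α, β)` is a Bailey pair relative to `a`, then
`(α', β')` with `α'_0 = α_0`, `α'_n = (1-a)(α_n/(1-aq^{2n}) - a q^{2n-2} α_{n-1}/(1-aq^{2n-2}))`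
and `β'_n = β_n` is a Bailey pair relative to `a/q`. -/
theorem key_lemma_one (q a : ℂ) (α β α' β' : ℕ → ℂ)
    (hqq : ∀ k, qp q q k ≠ 0) (ha : ∀ k, qp q a k ≠ 0) (haq : ∀ k, qp q (a * q) k ≠ 0)
    (hden : ∀ n : ℕ, 1 - a * q ^ (2 * n) ≠ 0)
    (hB : ∀ n, β n = ∑ j ∈ Finset.range (n + 1),
        α j / (qp q q (n - j) * qp q (a * q) (n + j)))
    (hα'0 : α' 0 = α 0)
    (hα' : ∀ n : ℕ, α' (n + 1) = (1 - a) *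
        (α (n + 1) / (1 - a * q ^ (2 * (n + 1)))
          - a * q ^ (2 * n) * α n / (1 - a * q ^ (2 * n))))
    (hβ' : ∀ n, β' n = β n) :
    ∀ n, β' n = ∑ j ∈ Finset.range (n + 1),
        α' j / (qp q q (n - j) * qp q a (n + j)) :=
  key_lemma_one_general q a α β α' β' hqq ha hden hB hα'0 hα' hβ'
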